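/- For each finite type X, define the total function I¹_X on subsets of Δ_X by: I¹_X(A) = {μ ∈ Δ_X : μ(S) ≥ 1/3} if A = {μ ∈ Δ_X : μ(S) ≥ 1/4} for some S ⊆ X (such S is unique when A ≠ ∅), and I¹_X(A) = A otherwise. Then the family {I¹_X} indexed by all finite types is a finitary inference procedure and it is representation independent. -/

import Mathlib

/-- A probability measure (probability mass function) on a finite type. -/
structure PM (X : Type) [Fintype X] where
  pm : X → ℝ
  nonneg : ∀ x, 0 ≤ pm x
  total : ∑ x, pm x = 1

namespace PM

variable {X Y : Type} [Fintype X] [Fintype Y]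

/-- The probability of a set `S`: `μ(S) = ∑_{x ∈ S} μ(x)`. -/
noncomputable def prob (μ : PM X) (S : Set X) : ℝ := ∑ x, S.indicator μ.pm x

lemma prob_nonneg (μ : PM X) (S : Set X) : 0 ≤ μ.prob S :=
  Finset.sum_nonneg fun x _ => Set.indicator_apply_nonneg fun _ => μ.nonneg x

/-- Marginal on the first component: `μ_X(A) = μ(A × Y)`. -/
noncomputable def margFst (μ : PM (X × Y)) : PM X where
  pm x := ∑ y, μ.pm (x, y)
  nonneg x := Finset.sum_nonneg fun y _ => μ.nonneg (x, y)
  total := by rw [← μ.total, ← Fintype.sum_prod_type]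

/-- Marginal on the second component: `μ_Y(B) = μ(X × B)`. -/
noncomputable def margSnd (μ : PM (X × Y)) : PM Y where
  pm y := ∑ x, μ.pm (x, y)
  nonneg y := Finset.sum_nonneg fun x _ => μ.nonneg (x, y)
  total := by rw [← μ.total, ← Fintype.sum_prod_type_right]

/-- Conditioning `μ|S`; the junk value `μ` is returned when `μ(S) = 0`. -/
noncomputable def cond (μ : PM X) (S : Set X) : PM X :=
  if h : 0 < μ.prob S then
    { pm := fun x => S.indicator μ.pm x / μ.prob S
      nonneg := fun x =>
        div_nonneg (Set.indicator_apply_nonneg fun _ => μ.nonneg x) (le_of_lt h)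
      total := by
        rw [← Finset.sum_div]
        exact div_self (ne_of_gt h) }
  else μ

end PM

open PM

/-- An `X`-inference procedure: a partial map on sets of probability measures. -/
structure InfProc (X : Type) [Fintype X] where
  dom : Set (Set (PM X))
  map : Set (PM X) → Set (PM X)
  map_subset : ∀ A ∈ dom, map A ⊆ A
  map_empty_iff : ∀ A ∈ dom, (map A = ∅ ↔ A = ∅)

/-- `KB ⊢_I θ`. -/
def Infers {X : Type} [Fintype X] (I : InfProc X) (KB θ : Set (PM X)) : Prop :=
  I.map KB ⊆ θ

section Lift

variable {X Y : Type} [Fintype X] [Fintype Y]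

/-- A constraint on `Δ_X` viewed as a constraint on `Δ_{X×Y}`: `KB↑`. -/
def liftKB (Y : Type) [Fintype Y] (KB : Set (PM X)) : Set (PM (X × Y)) :=
  {μ | margFst μ ∈ KB}

/-- `proj_X(B) = {μ_X : μ ∈ B}`. -/
def projFst (B : Set (PM (X × Y))) : Set (PM X) := margFst '' B

/-- `ψ ⊆ Δ_{X×Y}` is `X`-conservative over `KB ⊆ Δ_X`. -/
def Conservative (KB : Set (PM X)) (ψ : Set (PM (X × Y))) : Prop :=
  projFst (liftKB Y KB ∩ ψ) = KB

end Lift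

/-- Robustness of a finitary inference procedure. -/
def Robust (I : ∀ (X : Type) [Fintype X], InfProc X) : Prop :=
  ∀ (X Y : Type) [Fintype X] [Fintype Y], ∀ KB φ : Set (PM X),
    KB ∈ (I X).dom → ∀ ψ : Set (PM (X × Y)), Conservative KB ψ →
      (Infers (I X) KB φ ↔ Infers (I (X × Y)) (liftKB Y KB ∩ ψ) (liftKB Y φ))

/-- An inference procedure is essentially entailment. -/
def EssEntail {X : Type} [Fintype X] (I : InfProc X) : Prop :=
  ∀ KB ∈ I.dom, ∀ (S : Set X) (α β : ℝ),
    Infers I KB {μ | α < μ.prob S ∧ μ.prob S < β} →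
    KB ⊆ {μ | α ≤ μ.prob S ∧ μ.prob S ≤ β}

def DI1 (I : ∀ (X : Type) [Fintype X], InfProc X) : Prop :=
  ∀ (X : Type) [Fintype X], ∀ (S : Set X) (α β : ℝ), α ≤ β →
    {μ : PM X | α ≤ μ.prob S ∧ μ.prob S ≤ β} ∈ (I X).dom

def DI2 (I : ∀ (X : Type) [Fintype X], InfProc X) : Prop :=
  ∀ (X Y : Type) [Fintype X] [Fintype Y], ∀ KB : Set (PM X),
    KB ∈ (I X).dom → liftKB Y KB ∈ (I (X × Y)).dom

def DI3 (I : ∀ (X : Type) [Fintype X], InfProc X) : Prop :=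
  ∀ (X : Type) [Fintype X], ∀ KB₁ KB₂ : Set (PM X),
    KB₁ ∈ (I X).dom → KB₂ ∈ (I X).dom → KB₁ ∩ KB₂ ∈ (I X).dom

/-- An `X`-`Y` embedding: a homomorphism of set algebras. -/
structure Emb (X Y : Type) where
  f : Set X → Set Y
  map_union : ∀ S T, f (S ∪ T) = f S ∪ f T
  map_compl : ∀ S, f Sᶜ = (f S)ᶜ

/-- A faithful embedding. -/
def Emb.Faithful {X Y : Type} (e : Emb X Y) : Prop :=
  ∀ S T : Set X, S ⊆ T ↔ e.f S ⊆ e.f T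

section Embeddings

variable {X Y : Type} [Fintype X] [Fintype Y]

/-- `μ` and `ν` correspond under `f`. -/
def Corr (e : Emb X Y) (μ : PM X) (ν : PM Y) : Prop :=
  ∀ S : Set X, μ.prob S = ν.prob (e.f S)

/-- `f*(D)`, the union over `μ ∈ D` of the measures corresponding to `μ`. -/
def fstar (e : Emb X Y) (D : Set (PM X)) : Set (PM Y) :=
  {ν | ∃ μ ∈ D, Corr e μ ν}

/-- Sets of measures `D_X` and `D_Y` correspond under `f`. -/
def SetCorr (e : Emb X Y) (DX : Set (PM X)) (DY : Set (PM Y)) : Prop :=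
  (∀ ν ∈ DY, ∃ μ ∈ DX, Corr e μ ν) ∧ (∀ μ ∈ DX, ∃ ν ∈ DY, Corr e μ ν)

end Embeddings

/-- Representation independence of a finitary inference procedure. -/
def RepInd (I : ∀ (X : Type) [Fintype X], InfProc X) : Prop :=
  ∀ (X Y : Type) [Fintype X] [Fintype Y] (e : Emb X Y), e.Faithful →
    (∀ KB : Set (PM X), KB ∈ (I X).dom ↔ fstar e KB ∈ (I Y).dom) ∧
    (∀ KB : Set (PM X), KB ∈ (I X).dom → ∀ θ : Set (PM X),
      (Infers (I X) KB θ ↔ Infers (I Y) (fstar e KB) (fstar e θ)))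

def DI4 (I : ∀ (X : Type) [Fintype X], InfProc X) : Prop :=
  ∀ (X Y : Type) [Fintype X] [Fintype Y] (e : Emb X Y), e.Faithful →
    ∀ KB : Set (PM X), (KB ∈ (I X).dom ↔ fstar e KB ∈ (I Y).dom)

/-- `A ⇔ B` for sets of measures. -/
def iffSet {α : Type*} (A B : Set α) : Set α := (A ∩ B) ∪ (Aᶜ ∩ Bᶜ)

def DI5 (I : ∀ (X : Type) [Fintype X], InfProc X) : Prop :=
  ∀ (X Y : Type) [Fintype X] [Fintype Y] (KB : Set (PM (X × Y))) (e : Emb X Y),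
    e.Faithful → KB ∈ (I (X × Y)).dom → ∀ φ₁ : Set (PM X),
      KB ∩ iffSet (liftKB Y φ₁) {μ | margSnd μ ∈ fstar e φ₁} ∈ (I (X × Y)).dom

/-- Minimal default independence. -/
def MDI (I : ∀ (X : Type) [Fintype X], InfProc X) : Prop :=
  ∀ (X Y : Type) [Fintype X] [Fintype Y], ∀ KB : Set (PM X), ∀ (S : Set X) (T : Set Y),
    liftKB Y KB ∈ (I (X × Y)).dom →
    Infers (I (X × Y)) (liftKB Y KB)
      {μ | μ.prob (S ×ˢ T) = μ.prob (S ×ˢ (Set.univ : Set Y)) * μ.prob ((Set.univ : Set X) ×ˢ T)}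

/-- `KB` depends only on `S₁, …, S_k`. -/
def DependsOnly {X : Type} [Fintype X] {k : ℕ} (KB : Set (PM X)) (S : Fin k → Set X) : Prop :=
  ∀ μ μ' : PM X, (∀ i, μ.prob (S i) = μ'.prob (S i)) → (μ ∈ KB ↔ μ' ∈ KB)

/-- An atom over `S₁, …, S_k`. -/
def Atom {X : Type} {k : ℕ} (S : Fin k → Set X) (c : Fin k → Bool) : Set X :=
  ⋂ i, (if c i then S i else (S i)ᶜ)

section KL

variable {X : Type} [Fintype X]

/-- Absolute continuity of pmfs. -/
def AbsCont (μ' μ : PM X) : Prop := ∀ x, μ.pm x = 0 → μ'.pm x = 0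

/-- Relative entropy `D(μ'‖μ) ∈ [0,∞]` (it is `⊤` unless `μ' ≪ μ`). -/
noncomputable def KL (μ' μ : PM X) : EReal := by
  classical
  exact if AbsCont μ' μ then
    ((∑ x, μ'.pm x * Real.log (μ'.pm x / μ.pm x) : ℝ) : EReal)
  else ⊤

/-- The relative-entropy projection `μ|θ`. -/
def klProj (μ : PM X) (θ : Set (PM X)) : Set (PM X) :=
  {μ' | μ' ∈ θ ∧ KL μ' μ ≠ ⊤ ∧ ∀ μ'' ∈ θ, KL μ' μ ≤ KL μ'' μ}

/-- `D|θ = ⋃_{μ ∈ D} μ|θ`. -/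
def DProj (D : Set (PM X)) (θ : Set (PM X)) : Set (PM X) :=
  ⋃ μ ∈ D, klProj μ θ

end KL

section Products

variable {n : ℕ} {X : Fin n → Type} [∀ i, Fintype (X i)]

/-- The `i`-th marginal of a measure on a finite product. -/
noncomputable def margPi (μ : PM (∀ i, X i)) (i : Fin n) : PM (X i) where
  pm a := μ.prob {x | x i = a}
  nonneg a := PM.prob_nonneg _ _
  total := by
    classical
    unfold PM.prob
    rw [Finset.sum_comm]
    have h : ∀ x : (∀ i, X i),
        (∑ a, ({y : ∀ j, X j | y i = a}).indicator μ.pm x) = μ.pm x := by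
      intro x
      simp [Set.indicator_apply]
    simp only [h]
    exact μ.total

/-- `μ` is a product measure on `X₁ × ⋯ × Xₙ`. -/
def IsProdPM (μ : PM (∀ i, X i)) : Prop :=
  ∃ μi : ∀ i, PM (X i), ∀ U : ∀ i, Set (X i),
    μ.prob {x | ∀ i, x i ∈ U i} = ∏ i, (μi i).prob (U i)

end Products

/-- The set `P_Π(X)` of product measures. -/
def PPi {n : ℕ} (X : Fin n → Type) [∀ i, Fintype (X i)] : Set (PM (∀ i, X i)) :=
  {μ | IsProdPM μ}

/-- `e` is a product embedding. -/
def IsProdEmb {n : ℕ} {X Y : Fin n → Type} (e : Emb (∀ i, X i) (∀ i, Y i)) : Prop :=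
  ∃ ei : ∀ i, Emb (X i) (Y i), ∀ S : Set (∀ i, X i),
    e.f S = ⋃ x ∈ S, {y | ∀ i, y i ∈ (ei i).f {x i}}

/-!
An embedding of finite set algebras `e : Set X → Set Y` is `S ↦ π ⁻¹' S` for a map
`π : Y → X` (send `y` to the unique `x` with `y ∈ e {x}`), surjective when `e` is faithful.
Hence `ν` corresponds to `μ` iff `μ` is the pushforward of `ν` along `π`, and `f*` is the preimage
under the pushforward map, which is surjective and so reflects inclusions. It remains that `I¹`
commutes with these preimages: if the preimage of `A` is `{ν | 1/4 ≤ ν(T)}`, then (testing Dirac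
measures) `T` is a union of fibres of `π`, say `π ⁻¹' S`, and then `A = {μ | 1/4 ≤ μ(S)}`.
-/

open Function

namespace PM

variable {X Y : Type} [Fintype X] [Fintype Y]

lemma prob_singleton (μ : PM X) (x : X) : μ.prob {x} = μ.pm x := by
  classical
  simp [prob, Set.indicator_apply]

lemma ext_prob {μ ν : PM X} (h : ∀ S, μ.prob S = ν.prob S) : μ = ν := by
  obtain ⟨f, _, _⟩ := μ
  obtain ⟨g, _, _⟩ := ν
  congr
  funext x
  simpa only [prob_singleton] using h {x}

lemma prob_preimage_eq_sum_fibers (π : Y → X) (ν : PM Y) (S : Set X) :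
    ν.prob (π ⁻¹' S) = ∑ x, S.indicator (fun x => ν.prob (π ⁻¹' {x})) x := by
  classical
  rw [prob, ← Finset.sum_fiberwise Finset.univ π]
  refine Finset.sum_congr rfl fun x _ => ?_
  by_cases hx : x ∈ S <;> simp +contextual [prob, Finset.sum_filter, Set.indicator_apply, hx]

lemma prob_univ (μ : PM X) : μ.prob Set.univ = 1 := by
  simp [prob, μ.total]

noncomputable def map (π : Y → X) (ν : PM Y) : PM X where
  pm x := ν.prob (π ⁻¹' {x})
  nonneg _ := ν.prob_nonneg _
  total := by
    simpa [prob_univ] using (prob_preimage_eq_sum_fibers π ν Set.univ).symm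

@[simp]
lemma prob_map (π : Y → X) (ν : PM Y) (S : Set X) :
    (ν.map π).prob S = ν.prob (π ⁻¹' S) :=
  (prob_preimage_eq_sum_fibers π ν S).symm

lemma map_surjective {π : Y → X} (hπ : Surjective π) : Surjective (map π) := by
  intro μ
  refine ⟨μ.map (surjInv hπ), ext_prob fun S => ?_⟩
  rw [prob_map, prob_map, (rightInverse_surjInv hπ).preimage_preimage]

open Classical in
noncomputable def dirac (x : X) : PM X where
  pm y := if y = x then 1 else 0
  nonneg y := by split_ifs <;> norm_num
  total := by simp

open Classical in
lemma prob_dirac (x : X) (S : Set X) : (dirac x).prob S = if x ∈ S then 1 else 0 := by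
  rw [prob, Fintype.sum_eq_single x fun y hy => by simp [dirac, hy]]
  simp [dirac, Set.indicator_apply]

lemma map_dirac (π : Y → X) (y : Y) : (dirac y).map π = dirac (π y) :=
  ext_prob fun S => by rw [prob_map, prob_dirac, prob_dirac]; rfl

lemma dirac_mem_setOf_le_prob_iff {c : ℝ} (hc₀ : 0 < c) (hc₁ : c ≤ 1) (x : X) (S : Set X) :
    dirac x ∈ {μ : PM X | c ≤ μ.prob S} ↔ x ∈ S := by
  by_cases hx : x ∈ S <;> simp [prob_dirac, hx, hc₁, hc₀.not_ge]

end PM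

namespace Emb

variable {X Y : Type}

lemma map_univ (e : Emb X Y) : e.f Set.univ = Set.univ := by
  rw [← Set.union_compl_self ∅, e.map_union, e.map_compl, Set.union_compl_self]

lemma map_empty (e : Emb X Y) : e.f ∅ = ∅ := by
  rw [← Set.compl_univ, e.map_compl, map_univ, Set.compl_univ]

lemma monotone (e : Emb X Y) : Monotone e.f := fun S T h => by
  rw [← Set.union_eq_self_of_subset_left h, e.map_union]
  exact Set.subset_union_left

lemma exists_mem_map_singleton (e : Emb X Y) {s : Set X} (hs : s.Finite) {y : Y}
    (hy : y ∈ e.f s) : ∃ x ∈ s, y ∈ e.f {x} := by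
  induction s, hs using Set.Finite.induction_on with
  | empty => simp [map_empty] at hy
  | @insert a s _ _ ih =>
    rw [Set.insert_eq, e.map_union] at hy
    rcases hy with hy | hy
    · exact ⟨a, Set.mem_insert a s, hy⟩
    · obtain ⟨x, hx, hyx⟩ := ih hy
      exact ⟨x, Set.mem_insert_of_mem a hx, hyx⟩

lemma exists_eq_preimage [Finite X] (e : Emb X Y) : ∃ π : Y → X, ∀ S, e.f S = π ⁻¹' S := by
  have cover (y : Y) : ∃ x ∈ Set.univ, y ∈ e.f {x} :=
    e.exists_mem_map_singleton Set.finite_univ (by rw [map_univ]; trivial)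
  choose π _ hπ using cover
  refine ⟨π, fun S => Set.ext fun y => ⟨fun hy => ?_, fun hy => ?_⟩⟩
  · by_contra hyS
    have : y ∈ e.f Sᶜ := e.monotone (Set.singleton_subset_iff.2 hyS) (hπ y)
    exact (e.map_compl S ▸ this) hy
  · exact e.monotone (Set.singleton_subset_iff.2 hy) (hπ y)

lemma Faithful.surjective {e : Emb X Y} (he : e.Faithful) {π : Y → X}
    (hπ : ∀ S, e.f S = π ⁻¹' S) : Surjective π := by
  intro x
  by_contra! h
  have : ({x} : Set X) ⊆ ∅ := (he _ _).2 fun y hy => by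
    rw [hπ] at hy
    exact (h y hy).elim
  exact this rfl

end Emb

lemma fstar_eq_preimage_map {X Y : Type} [Fintype X] [Fintype Y] {e : Emb X Y} {π : Y → X}
    (hπ : ∀ S, e.f S = π ⁻¹' S) (D : Set (PM X)) : fstar e D = PM.map π ⁻¹' D := by
  ext ν
  simp only [fstar, Corr, hπ, ← PM.prob_map]
  exact ⟨fun ⟨μ, hμ, h⟩ => (PM.ext_prob h ▸ hμ :), fun h => ⟨_, h, fun _ => rfl⟩⟩

section Threshold

variable {X Y : Type} [Fintype X] [Fintype Y] {c : ℝ}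

lemma setOf_le_prob_inj (hc₀ : 0 < c) (hc₁ : c ≤ 1) {S T : Set X} :
    {μ : PM X | c ≤ μ.prob S} = {μ | c ≤ μ.prob T} ↔ S = T := by
  refine ⟨fun h => Set.ext fun x => ?_, fun h => h ▸ rfl⟩
  rw [← PM.dirac_mem_setOf_le_prob_iff hc₀ hc₁, h, PM.dirac_mem_setOf_le_prob_iff hc₀ hc₁]

lemma setOf_le_prob_eq_empty_iff (hc₀ : 0 < c) (hc₁ : c ≤ 1) (S : Set X) :
    {μ : PM X | c ≤ μ.prob S} = ∅ ↔ S = ∅ := by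
  refine ⟨fun h => Set.eq_empty_of_forall_notMem fun x hx => ?_, fun h => ?_⟩
  · rw [← PM.dirac_mem_setOf_le_prob_iff hc₀ hc₁, h] at hx
    exact hx
  · simp [h, PM.prob, hc₀.not_ge]

lemma preimage_map_setOf_le_prob (π : Y → X) (S : Set X) :
    PM.map π ⁻¹' {μ | c ≤ μ.prob S} = {ν | c ≤ ν.prob (π ⁻¹' S)} := by
  ext ν
  simp

lemma preimage_map_eq_setOf_le_prob_iff {π : Y → X} (hπ : Surjective π) (hc₀ : 0 < c)
    (hc₁ : c ≤ 1) (A : Set (PM X)) (T : Set Y) :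
    PM.map π ⁻¹' A = {ν | c ≤ ν.prob T} ↔ ∃ S, π ⁻¹' S = T ∧ A = {μ | c ≤ μ.prob S} := by
  refine ⟨fun h => ?_, ?_⟩
  · have saturated : π ⁻¹' (π '' T) = T := by
      refine (Set.subset_preimage_image π T).antisymm' fun y ⟨y', hy', hyy'⟩ => ?_
      rw [← PM.dirac_mem_setOf_le_prob_iff hc₀ hc₁, ← h] at hy' ⊢
      simpa only [Set.mem_preimage, PM.map_dirac, hyy'] using hy'
    refine ⟨π '' T, saturated, (PM.map_surjective hπ).preimage_injective ?_⟩
    rw [h, preimage_map_setOf_le_prob, saturated]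
  · rintro ⟨S, rfl, rfl⟩
    exact preimage_map_setOf_le_prob π S

end Threshold

section I1

variable {X Y : Type} [Fintype X] [Fintype Y]

/-- The map of `I¹`. As `S ↦ {μ | 1/4 ≤ μ.prob S}` is injective (`setOf_le_prob_inj`),
quantifying over all `S` amounts to the case distinction in the definition of `I¹`. -/
def strengthen (A : Set (PM X)) : Set (PM X) :=
  {μ ∈ A | ∀ S : Set X, A = {ν | 1/4 ≤ ν.prob S} → 1/3 ≤ μ.prob S}

lemma strengthen_setOf_quarter_le_prob (S : Set X) :
    strengthen {μ : PM X | 1/4 ≤ μ.prob S} = {μ | 1/3 ≤ μ.prob S} := by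
  ext μ
  simp only [strengthen, Set.mem_ofPred_eq, setOf_le_prob_inj (by norm_num : (0:ℝ) < 1/4)
    (by norm_num), forall_eq']
  exact ⟨And.right, fun h => ⟨le_trans (by norm_num) h, h⟩⟩

lemma strengthen_of_forall_ne {A : Set (PM X)} (h : ¬ ∃ S : Set X, A = {μ | 1/4 ≤ μ.prob S}) :
    strengthen A = A :=
  Set.sep_eq_self_iff_mem_true.2 fun _ _ S hS => (h ⟨S, hS⟩).elim

lemma strengthen_eq_empty_iff (A : Set (PM X)) : strengthen A = ∅ ↔ A = ∅ := by
  by_cases h : ∃ S : Set X, A = {μ | 1/4 ≤ μ.prob S}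
  · obtain ⟨S, rfl⟩ := h
    rw [strengthen_setOf_quarter_le_prob, setOf_le_prob_eq_empty_iff (by norm_num) (by norm_num),
      setOf_le_prob_eq_empty_iff (by norm_num) (by norm_num)]
  · rw [strengthen_of_forall_ne h]

lemma strengthen_preimage_map {π : Y → X} (hπ : Surjective π) (A : Set (PM X)) :
    strengthen (PM.map π ⁻¹' A) = PM.map π ⁻¹' strengthen A := by
  ext ν
  simp only [strengthen, Set.mem_preimage, Set.mem_ofPred_eq,
    preimage_map_eq_setOf_le_prob_iff hπ (by norm_num : (0:ℝ) < 1/4) (by norm_num),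
    forall_exists_index, and_imp, PM.prob_map]
  rw [forall_comm]
  simp only [forall_eq']

noncomputable def I1 (X : Type) [Fintype X] : InfProc X where
  dom := Set.univ
  map := strengthen
  map_subset _ _ := Set.sep_subset _ _
  map_empty_iff A _ := strengthen_eq_empty_iff A
end I1

/-- the inference procedure `I¹` (strengthening
`Pr(S) ≥ 1/4` to `Pr(S) ≥ 1/3`, and acting as entailment otherwise) is a
finitary inference procedure with total domain, and it is representation
independent. -/
theorem stmt11 :
    ∃ I : ∀ (X : Type) [Fintype X], InfProc X,
      (∀ (X : Type) [Fintype X], (I X).dom = Set.univ) ∧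
      (∀ (X : Type) [Fintype X] (S : Set X),
        (I X).map {μ : PM X | 1/4 ≤ μ.prob S} = {μ : PM X | 1/3 ≤ μ.prob S}) ∧
      (∀ (X : Type) [Fintype X] (A : Set (PM X)),
        (¬ ∃ S : Set X, A = {μ : PM X | 1/4 ≤ μ.prob S}) → (I X).map A = A) ∧
      RepInd I := by
  refine ⟨I1, fun _ _ => rfl, fun _ _ => strengthen_setOf_quarter_le_prob,
    fun _ _ _ => strengthen_of_forall_ne, fun X Y _ _ e he => ?_⟩
  obtain ⟨π, hπ⟩ := e.exists_eq_preimage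
  have hsurj := he.surjective hπ
  refine ⟨fun _ => iff_of_true trivial trivial, fun KB _ θ => ?_⟩
  change strengthen KB ⊆ θ ↔ strengthen (fstar e KB) ⊆ fstar e θ
  rw [fstar_eq_preimage_map hπ, fstar_eq_preimage_map hπ, strengthen_preimage_map hsurj,
    (PM.map_surjective hsurj).preimage_subset_preimage_iff]
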